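/- arXiv:2002.02666 — 2 statements merged into one kernel-verified Lean document; each statement's English description precedes it below -/
import Mathlib

section
/- Let G be a finite simple graph on vertex set [n] and let L_G be its bond lattice (the lattice of partitions of [n] induced by connected components of spanning subgraphs of G, ordered by refinement). Then the chromatic polynomial of G satisfies χ_G(t) = Σ_{p ∈ L_G} μ(0, p) · t^{n − r(p)}, where μ is the Möbius function of L_G and r(p) = n − |p| with |p| the number of blocks of the partition p. -/
open scoped Classical

/-- The partition (as a setoid) of the vertex set induced by the connected
components of a graph `H`. -/
def componentSetoid {n : ℕ} (H : SimpleGraph (Fin n)) : Setoid (Fin n) :=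
  H.reachableSetoid

/-- The bond lattice of a finite simple graph `G` on `[n]`: the poset of all
partitions of the vertex set induced by connected components of spanning
subgraphs of `G`, ordered by refinement (the order induced from setoids);
its minimum is the partition into singletons. -/
def BondLattice {n : ℕ} (G : SimpleGraph (Fin n)) : Type :=
  {s : Setoid (Fin n) // ∃ H : SimpleGraph (Fin n), H ≤ G ∧ s = componentSetoid H}

instance {n : ℕ} (G : SimpleGraph (Fin n)) : PartialOrder (BondLattice G) :=
  Subtype.partialOrder _

noncomputable instance {n : ℕ} (G : SimpleGraph (Fin n)) : Fintype (BondLattice G) :=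
  Fintype.ofSurjective
    (fun H : SimpleGraph (Fin n) =>
      if h : H ≤ G then (⟨componentSetoid H, H, h, rfl⟩ : BondLattice G)
      else ⟨componentSetoid ⊥, ⊥, bot_le, rfl⟩)
    (by rintro ⟨s, H, hH, rfl⟩; exact ⟨H, by simp [hH]; rfl⟩)

/-- The number of blocks of a partition `p` in the bond lattice. -/
noncomputable def numBlocks {n : ℕ} {G : SimpleGraph (Fin n)} (p : BondLattice G) : ℕ :=
  Nat.card (Quotient p.val)

/-!
A colouring `c` determines the partition `σ c ∈ L_G` into the components of
the subgraph of monochromatic edges of `G`. A partition `p ∈ L_G` lies below `σ c` exactly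
when `c` is constant on the blocks of `p`, which happens for `t ^ |p|` colourings, and `c`
is proper exactly when `σ c = 0`. Hence, by the defining recursion of `μ`,

  `χ_G(t) = ∑_c ∑_{p ≤ σ c} μ(0,p) = ∑_p μ(0,p) · #{c | p ≤ σ c} = ∑_p μ(0,p) t^|p|`.
-/

namespace SimpleGraph

variable {V α : Type*}

theorem reachableSetoid_le_iff {G : SimpleGraph V} {s : Setoid V} :
    G.reachableSetoid ≤ s ↔ ∀ u v, G.Adj u v → s u v := by
  refine ⟨fun h u v huv => h huv.reachable, fun h u v huv => ?_⟩
  obtain ⟨w⟩ := huv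
  induction w with
  | nil => exact s.refl _
  | cons huv _ ih => exact s.trans (h _ _ huv) ih

def monochromaticSubgraph (G : SimpleGraph V) (c : V → α) : SimpleGraph V where
  Adj u v := G.Adj u v ∧ c u = c v
  symm := ⟨fun _ _ h => ⟨h.1.symm, h.2.symm⟩⟩
  loopless := ⟨fun _ h => G.loopless.irrefl _ h.1⟩

theorem monochromaticSubgraph_adj {G : SimpleGraph V} {c : V → α} {u v : V} :
    (G.monochromaticSubgraph c).Adj u v ↔ G.Adj u v ∧ c u = c v :=
  Iff.rfl

theorem monochromaticSubgraph_le (G : SimpleGraph V) (c : V → α) :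
    G.monochromaticSubgraph c ≤ G :=
  fun _ _ h => (monochromaticSubgraph_adj.1 h).1

theorem reachableSetoid_monochromaticSubgraph_le_ker (G : SimpleGraph V) (c : V → α) :
    (G.monochromaticSubgraph c).reachableSetoid ≤ Setoid.ker c :=
  reachableSetoid_le_iff.2 fun _ _ h => (monochromaticSubgraph_adj.1 h).2

end SimpleGraph

namespace BondLattice

open SimpleGraph

variable {n : ℕ} {G : SimpleGraph (Fin n)} {α : Type*}

def ofColoring (G : SimpleGraph (Fin n)) (c : Fin n → α) : BondLattice G :=
  ⟨componentSetoid (G.monochromaticSubgraph c), _, G.monochromaticSubgraph_le c, rfl⟩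

theorem le_ofColoring_iff (p : BondLattice G) (c : Fin n → α) :
    p ≤ ofColoring G c ↔ p.val ≤ Setoid.ker c := by
  refine ⟨fun h => le_trans (α := Setoid (Fin n)) h
    (G.reachableSetoid_monochromaticSubgraph_le_ker c), fun h => ?_⟩
  obtain ⟨_, H, hHG, rfl⟩ := p
  exact reachableSetoid_le_iff.2 fun u v huv =>
    (Adj.reachable (monochromaticSubgraph_adj.2 ⟨hHG huv, h huv.reachable⟩) :)

theorem ofColoring_val_eq_bot_iff (c : Fin n → α) :
    (ofColoring G c).val = ⊥ ↔ ∀ i j, G.Adj i j → c i ≠ c j := by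
  refine ⟨fun h i j hij hc => G.ne_of_adj hij ?_, fun h => le_bot_iff.1 ?_⟩
  · have hreach : (ofColoring G c).val i j :=
      Adj.reachable (monochromaticSubgraph_adj.2 ⟨hij, hc⟩)
    rwa [h] at hreach
  · refine reachableSetoid_le_iff.2 fun i j hij => ?_
    obtain ⟨hadj, hc⟩ := monochromaticSubgraph_adj.1 hij
    exact absurd hc (h i j hadj)

theorem card_le_ofColoring [Finite α] (p : BondLattice G) :
    Nat.card {c : Fin n → α // p ≤ ofColoring G c} = Nat.card α ^ numBlocks p := by
  simp_rw [le_ofColoring_iff]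
  rw [Nat.card_congr (Setoid.liftEquiv p.val), Nat.card_fun, numBlocks]

theorem numBlocks_le (p : BondLattice G) : numBlocks p ≤ n := by
  simpa [numBlocks, Nat.card_eq_fintype_card] using
    Nat.card_le_card_of_surjective _ (Quotient.mk_surjective (s := p.val))

theorem filter_le_eq_singleton {q : BondLattice G} (hq : q.val = ⊥) :
    Finset.univ.filter (· ≤ q) = {q} := by
  ext l
  simp only [Finset.mem_filter, Finset.mem_univ, true_and, Finset.mem_singleton]
  refine ⟨fun hl => Subtype.ext ?_, fun hl => hl.le⟩
  rw [hq, ← le_bot_iff, ← hq]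
  exact hl

end BondLattice

/-- For a finite simple graph `G` on `[n]` with bond lattice `L_G`, the chromatic
polynomial satisfies `χ_G(t) = ∑_{p ∈ L_G} μ(0, p) t^{n - r(p)}`, where `μ` is the
Möbius function of `L_G` (characterized by `μ(0,0) = 1` and
`∑_{l ≤ q} μ(0,l) = 0` for `q > 0`) and `r(p) = n - |p|` with `|p|` the number of
blocks of `p`.  The chromatic polynomial is evaluated at `t ∈ ℕ` as the number of
proper colorings of `G` with `t` colors. -/
theorem chromatic_polynomial_eq_moebius_sum {n : ℕ} (G : SimpleGraph (Fin n))
    (μ : BondLattice G → ℤ)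
    (hμ_bot : ∀ p : BondLattice G, p.val = ⊥ → μ p = 1)
    (hμ_sum : ∀ q : BondLattice G, q.val ≠ ⊥ →
      ∑ l ∈ Finset.univ.filter (fun l : BondLattice G => l ≤ q), μ l = 0) :
    ∀ t : ℕ,
      (Nat.card {c : Fin n → Fin t // ∀ i j, G.Adj i j → c i ≠ c j} : ℤ) =
        ∑ p : BondLattice G, μ p * (t : ℤ) ^ (n - (n - numBlocks p)) := by
  intro t
  have moebius (q : BondLattice G) :
      ∑ l ∈ Finset.univ.filter (· ≤ q), μ l = if q.val = ⊥ then 1 else 0 := by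
    split_ifs with hq
    · rw [BondLattice.filter_le_eq_singleton hq, Finset.sum_singleton, hμ_bot q hq]
    · exact hμ_sum q hq
  calc (Nat.card {c : Fin n → Fin t // ∀ i j, G.Adj i j → c i ≠ c j} : ℤ)
      = ∑ c : Fin n → Fin t, if (BondLattice.ofColoring G c).val = ⊥ then 1 else 0 := by
        simp_rw [BondLattice.ofColoring_val_eq_bot_iff, Finset.sum_boole,
          Nat.card_eq_fintype_card, Fintype.card_subtype]
    _ = ∑ c : Fin n → Fin t,
          ∑ p ∈ Finset.univ.filter (· ≤ BondLattice.ofColoring G c), μ p := by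
        simp_rw [moebius]
    _ = ∑ p : BondLattice G,
          ∑ _c ∈ Finset.univ.filter (p ≤ BondLattice.ofColoring G ·), μ p :=
        Finset.sum_comm' (by simp)
    _ = ∑ p : BondLattice G, μ p * (t : ℤ) ^ (n - (n - numBlocks p)) := by
        refine Finset.sum_congr rfl fun p _ => ?_
        rw [Finset.sum_const, ← Fintype.card_subtype, ← Nat.card_eq_fintype_card,
          BondLattice.card_le_ofColoring, Nat.card_fin,
          Nat.sub_sub_self (BondLattice.numBlocks_le p)]
        ring
end

section
/- Let L be a finite geometric lattice and A*(L) its Orlik–Solomon algebra over a commutative ring R. For p, q ∈ L with r(p ∨ q) < r(p) + r(q), the product of the homogeneous components satisfies A*(L)_p · A*(L)_q = 0. -/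
open scoped Classical

structure GeometricLattice (L : Type*) [Lattice L] [OrderBot L] [Fintype L] where
  rk : L → ℕ
  rk_bot : rk ⊥ = 0
  rk_strictMono : StrictMono rk
  rk_covby : ∀ {p q : L}, p ⋖ q → rk q = rk p + 1
  submodular : ∀ p q : L, rk (p ⊓ q) + rk (p ⊔ q) ≤ rk p + rk q
  atomistic : ∀ p : L, p ≠ ⊥ → ∃ S : Finset L, (∀ a ∈ S, IsAtom a) ∧ p = S.sup id

variable (R : Type*) [CommRing R] (L : Type*) [Lattice L] [OrderBot L] [Fintype L]

/-- The type of atoms of `L`. -/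
def Atoms : Type _ := {a : L // IsAtom a}

noncomputable instance : Fintype (Atoms L) := Subtype.fintype _

/-- A fixed enumeration of the elements of `L`, used only to order the atoms in
exterior-algebra sign computations. -/
noncomputable def elemIdx : L → ℕ := fun x => ((Fintype.equivFin L) x : ℕ)

/-- The underlying module of the exterior algebra `E^*(L)` on the atoms of `L`:
the free `R`-module with basis `e_S` for `S` a finite set of atoms. -/
def OSModule : Type _ := Finset (Atoms L) →₀ R

noncomputable instance : AddCommGroup (OSModule R L) := Finsupp.instAddCommGroup
noncomputable instance : Module R (OSModule R L) := Finsupp.module _ _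

/-- basis vector `e_S` -/
noncomputable def osE (S : Finset (Atoms L)) : OSModule R L := Finsupp.single S 1

/-- the sign exponent of `a` inside `S`. -/
noncomputable def delSign (S : Finset (Atoms L)) (a : Atoms L) : ℕ :=
  (S.filter (fun b => elemIdx L b.val < elemIdx L a.val)).card

/-- the Orlik–Solomon derivation `∂ e_S = ∑_j (-1)^{j-1} e_{S \ a_j}`. -/
noncomputable def osDel : OSModule R L →ₗ[R] OSModule R L :=
  Finsupp.lift (OSModule R L) R (Finset (Atoms L)) fun S =>
    ∑ a ∈ S, ((-1 : R) ^ delSign L S a) • osE R L (S.erase a)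

/-- number of inversions between `S` and `T` in the chosen ordering. -/
noncomputable def mulSign (S T : Finset (Atoms L)) : ℕ :=
  ((S ×ˢ T).filter (fun x => elemIdx L x.2.val < elemIdx L x.1.val)).card

/-- the exterior product on `E^*(L)`: `e_S ⋅ e_T = ± e_{S ∪ T}` if `S, T` are
disjoint, and `0` otherwise. -/
noncomputable def osMul : OSModule R L →ₗ[R] OSModule R L →ₗ[R] OSModule R L :=
  Finsupp.lift (OSModule R L →ₗ[R] OSModule R L) R (Finset (Atoms L)) fun S =>
    Finsupp.lift (OSModule R L) R (Finset (Atoms L)) fun T =>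
      if Disjoint S T then ((-1 : R) ^ mulSign L S T) • osE R L (S ∪ T) else 0

/-- a set of atoms is dependent if the rank of its join is less than its size. -/
def IsDepSet (gl : GeometricLattice L) (S : Finset (Atoms L)) : Prop :=
  gl.rk (S.sup fun a => a.val) < S.card

/-- The Orlik–Solomon ideal: the span of all products `e_T ⋅ ∂ e_S` for `S` a
dependent set of atoms (this spans the two-sided ideal generated by the `∂ e_S`). -/
noncomputable def osIdeal (gl : GeometricLattice L) : Submodule R (OSModule R L) :=
  Submodule.span R {x | ∃ (T S : Finset (Atoms L)), IsDepSet L gl S ∧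
    x = osMul R L (osE R L T) (osDel R L (osE R L S))}

/-- the `L`-homogeneous part of `E^*(L)` of order `p`: the span of the `e_S` with
`⋁ S = p`. -/
noncomputable def osPiece (p : L) : Submodule R (OSModule R L) :=
  Submodule.span R {x | ∃ S : Finset (Atoms L), (S.sup fun a => a.val) = p ∧ x = osE R L S}


lemma lift_single_one {M : Type*} [AddCommGroup M] [Module R M]
    (f : Finset (Atoms L) → M) (S : Finset (Atoms L)) :
    Finsupp.lift M R (Finset (Atoms L)) f (Finsupp.single S 1) = f S := by
  erw [Finsupp.lift_apply]
  rw [Finsupp.sum_single_index (h := fun x r => r • f x) (zero_smul _ _), one_smul]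

lemma singleton_union_erase {α : Type*} [DecidableEq α] (s : Finset α) (a : α) (h : a ∈ s) :
    {a} ∪ s.erase a = s := by
  ext x; simp only [Finset.mem_union, Finset.mem_singleton, Finset.mem_erase]
  constructor
  · rintro (rfl | ⟨-, hx⟩); exact h; exact hx
  · intro hx; by_cases hxa : x = a; exact Or.inl hxa; exact Or.inr ⟨hxa, hx⟩

lemma osMul_osE (S : Finset (Atoms L)) :
    osMul R L (osE R L S) = Finsupp.lift (OSModule R L) R (Finset (Atoms L)) fun T =>
      if Disjoint S T then ((-1 : R) ^ mulSign L S T) • osE R L (S ∪ T) else 0 := by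
  rw [osMul, osE]; exact lift_single_one R L _ S

lemma osMul_osE_osE (S T : Finset (Atoms L)) :
    osMul R L (osE R L S) (osE R L T) =
      if Disjoint S T then ((-1 : R) ^ mulSign L S T) • osE R L (S ∪ T) else 0 := by
  rw [osMul_osE, osE]; exact lift_single_one R L _ T

lemma osDel_osE (U : Finset (Atoms L)) :
    osDel R L (osE R L U) = ∑ a ∈ U, ((-1 : R) ^ delSign L U a) • osE R L (U.erase a) := by
  rw [osDel, osE]; exact lift_single_one R L _ U

lemma rk_sup_le_card (gl : GeometricLattice L) (S : Finset (Atoms L)) :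
    gl.rk (S.sup fun a => a.val) ≤ S.card := by
  classical
  induction S using Finset.cons_induction with
  | empty => simp [gl.rk_bot]
  | cons a S ha ih =>
    rw [Finset.sup_cons, Finset.card_cons]
    have hsub := gl.submodular a.val (S.sup fun a => a.val)
    have hatom : gl.rk a.val = 1 := by
      have := gl.rk_covby a.2.bot_covBy
      rw [this, gl.rk_bot]
    omega

lemma osE_mem_osIdeal (gl : GeometricLattice L) (U : Finset (Atoms L))
    (hU : IsDepSet L gl U) : osE R L U ∈ osIdeal R L gl := by
  have hne : U.Nonempty := by
    rcases Finset.eq_empty_or_nonempty U with rfl | hne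
    · exact absurd hU (by simp [IsDepSet])
    · exact hne
  obtain ⟨a, ha⟩ := hne
  have key : osMul R L (osE R L {a}) (osDel R L (osE R L U)) =
      ((-1 : R) ^ (delSign L U a + mulSign L {a} (U.erase a))) • osE R L U := by
    rw [osDel_osE, map_sum]
    have hterm : ∀ b ∈ U,
        osMul R L (osE R L {a}) (((-1 : R) ^ delSign L U b) • osE R L (U.erase b))
          = if b = a then
              ((-1 : R) ^ (delSign L U a + mulSign L {a} (U.erase a))) • osE R L U
            else 0 := by
      intro b hb
      rw [map_smul, osMul_osE_osE]
      by_cases hba : b = a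
      · subst hba
        rw [if_pos (by simp), if_pos rfl, singleton_union_erase U b hb,
          smul_smul, ← pow_add]
      · have hmem : a ∈ U.erase b := Finset.mem_erase.2 ⟨fun hc => hba hc.symm, ha⟩
        rw [if_neg (by simp [Finset.disjoint_singleton_left, hmem]), smul_zero, if_neg hba]
    rw [Finset.sum_congr rfl hterm, Finset.sum_ite_eq' U a, if_pos ha]
  have hz : osMul R L (osE R L {a}) (osDel R L (osE R L U)) ∈ osIdeal R L gl :=
    Submodule.subset_span ⟨{a}, U, hU, rfl⟩
  have hsm := Submodule.smul_mem (osIdeal R L gl)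
    ((-1 : R) ^ (delSign L U a + mulSign L {a} (U.erase a))) hz
  rw [key, smul_smul, ← pow_add, ← two_mul, pow_mul, neg_one_sq, one_pow, one_smul] at hsm
  exact hsm

/-- In the Orlik–Solomon algebra `A^*(L) = E^*(L)/I(L)` of a finite geometric
lattice, if `rk (p ⊔ q) < rk p + rk q` then `A^*(L)_p ⋅ A^*(L)_q = 0`; that is,
the product (in `E^*(L)`) of any element of order `p` with any element of order
`q` lies in the Orlik–Solomon ideal. -/
theorem osPiece_mul_osPiece_eq_zero (gl : GeometricLattice L) (p q : L)
    (h : gl.rk (p ⊔ q) < gl.rk p + gl.rk q) :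
    ∀ x ∈ osPiece R L p, ∀ y ∈ osPiece R L q,
      osMul R L x y ∈ osIdeal R L gl := by
  intro x hx y hy
  have key : ∀ S T : Finset (Atoms L), (S.sup fun a => a.val) = p →
      (T.sup fun a => a.val) = q →
      osMul R L (osE R L S) (osE R L T) ∈ osIdeal R L gl := by
    intro S T hS hT
    rw [osMul_osE_osE]
    split_ifs with hd
    · refine Submodule.smul_mem _ _ (osE_mem_osIdeal R L gl _ ?_)
      have h1 := rk_sup_le_card L gl S
      have h2 := rk_sup_le_card L gl T
      rw [hS] at h1; rw [hT] at h2
      unfold IsDepSet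
      rw [Finset.sup_union, hS, hT, Finset.card_union_of_disjoint hd]
      omega
    · exact Submodule.zero_mem _
  have inner : ∀ S : Finset (Atoms L), (S.sup fun a => a.val) = p →
      ∀ z ∈ osPiece R L q, osMul R L (osE R L S) z ∈ osIdeal R L gl := by
    intro S hS z hz
    refine Submodule.span_induction ?_ ?_ ?_ ?_ hz
    · rintro _ ⟨T, hT, rfl⟩; exact key S T hS hT
    · rw [map_zero]; exact Submodule.zero_mem _
    · intro u v _ _ hu hv; rw [map_add]; exact Submodule.add_mem _ hu hv
    · intro c u _ hu; rw [map_smul]; exact Submodule.smul_mem _ _ hu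
  refine Submodule.span_induction ?_ ?_ ?_ ?_ hx
  · rintro _ ⟨S, hS, rfl⟩; exact inner S hS y hy
  · rw [map_zero, LinearMap.zero_apply]; exact Submodule.zero_mem _
  · intro u v _ _ hu hv
    rw [map_add, LinearMap.add_apply]; exact Submodule.add_mem _ hu hv
  · intro c u _ hu
    rw [map_smul, LinearMap.smul_apply]; exact Submodule.smul_mem _ _ hu
end
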